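/- arXiv:math/0611467 — 2 statements merged into one kernel-verified Lean document; each statement's English description precedes it below -/
import Mathlib

section
/- Let A be a finite-dimensional commutative unital ℝ-algebra with basis e₀ = 1, e₁, ..., eₙ, and f(x) = ∑ₖ eₖ uₖ(x) with uₖ ∈ C¹. Then f is A-holomorphic if and only if the Cauchy–Riemann type conditions hold: for each l = 1, ..., n and all x, ∑ₖ eₖ ∂uₖ/∂xₗ(x) = eₗ · ∑ₖ eₖ ∂uₖ/∂x₀(x). -/
/-!
The derivative along the line `t ↦ x + t • v` of a `C¹` map is `Df(x) v`, and the sum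
`∑ₖ eₖ ∂uₖ/∂xₗ` reassembles the coordinates of `Df(x) eₗ`. So `f` is `A`-holomorphic exactly when
each `Df(x)` is multiplication by `Df(x) 1`, and a linear map is multiplication by its value at
`1` as soon as this holds on a basis containing `1`.
-/

open Module

theorem DifferentiableAt.hasDerivAt_comp_add_smul {E F : Type*} [NormedAddCommGroup E]
    [NormedSpace ℝ E] [NormedAddCommGroup F] [NormedSpace ℝ F] {f : E → F} {x : E}
    (hf : DifferentiableAt ℝ f x) (v : E) :
    HasDerivAt (fun t : ℝ => f (x + t • v)) (fderiv ℝ f x v) 0 := by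
  have hline : HasDerivAt (fun t : ℝ => x + t • v) v 0 := by
    simpa using ((hasDerivAt_id (0 : ℝ)).smul_const v).const_add x
  exact (by simpa using hf.hasFDerivAt : HasFDerivAt f (fderiv ℝ f x) (x + (0 : ℝ) • v))
    |>.comp_hasDerivAt 0 hline

theorem Module.Basis.sum_deriv_repr_smul_eq_fderiv {E F ι : Type*} [NormedAddCommGroup E]
    [NormedSpace ℝ E] [NormedAddCommGroup F] [NormedSpace ℝ F] [FiniteDimensional ℝ F]
    [Fintype ι] (b : Basis ι ℝ F) {f : E → F} {x : E} (hf : DifferentiableAt ℝ f x) (v : E) :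
    ∑ k, deriv (fun t : ℝ => b.repr (f (x + t • v)) k) 0 • b k = fderiv ℝ f x v := by
  have hcoord (k : ι) : deriv (fun t : ℝ => b.repr (f (x + t • v)) k) 0 =
      b.repr (fderiv ℝ f x v) k :=
    ((LinearMap.toContinuousLinearMap (b.coord k)).hasFDerivAt.comp_hasDerivAt 0
      (hf.hasDerivAt_comp_add_smul v)).deriv
  simp only [hcoord]
  exact b.sum_repr _

theorem exists_hasDerivAt_comp_add_smul_mul_iff {A : Type*} [NormedCommRing A]
    [NormedAlgebra ℝ A] {f : A → A} (hf : Differentiable ℝ f) :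
    (∃ f' : A → A, ∀ x h : A, HasDerivAt (fun ε : ℝ => f (x + ε • h)) (h * f' x) 0) ↔
      ∀ x h : A, fderiv ℝ f x h = h * fderiv ℝ f x 1 := by
  constructor
  · rintro ⟨f', hf'⟩ x h
    have hD (v : A) : fderiv ℝ f x v = v * f' x :=
      ((hf x).hasDerivAt_comp_add_smul v).unique (hf' x v)
    rw [hD, hD, one_mul]
  · intro hD
    exact ⟨fun x => fderiv ℝ f x 1, fun x h => hD x h ▸ (hf x).hasDerivAt_comp_add_smul h⟩

theorem Module.Basis.forall_apply_eq_mul_apply_one_iff {R A ι : Type*} [CommSemiring R]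
    [Semiring A] [Algebra R A] (b : Basis ι R A) {i₀ : ι} (hb : b i₀ = 1) (L : A →ₗ[R] A) :
    (∀ h, L h = h * L 1) ↔ ∀ i, i ≠ i₀ → L (b i) = b i * L 1 := by
  refine ⟨fun hL i _ => hL (b i), fun hL => ?_⟩
  have hbasis (i : ι) : L (b i) = LinearMap.mulRight R (L 1) (b i) := by
    rcases eq_or_ne i i₀ with rfl | hi
    · simp [hb]
    · exact hL i hi
  exact fun h => LinearMap.congr_fun (b.ext hbasis) h

/-- Cauchy–Riemann type conditions: a `C¹` function `f = ∑ₖ eₖ uₖ` on a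
finite-dimensional commutative unital ℝ-algebra is `A`-holomorphic iff for each
`l ≠ 0`, `∑ₖ eₖ ∂uₖ/∂xₗ = eₗ · ∑ₖ eₖ ∂uₖ/∂x₀`. -/
theorem A_holomorphic_iff_cauchy_riemann
    (A : Type*) [NormedCommRing A] [NormedAlgebra ℝ A] [FiniteDimensional ℝ A]
    (n : ℕ) (b : Module.Basis (Fin (n + 1)) ℝ A) (hb0 : b 0 = 1)
    (f : A → A) (hf : ContDiff ℝ 1 f) :
    (∃ f' : A → A, ∀ x h : A,
        HasDerivAt (fun ε : ℝ => f (x + ε • h)) (h * f' x) 0) ↔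
      (∀ l : Fin (n + 1), l ≠ 0 → ∀ x : A,
        ∑ k, (deriv (fun t : ℝ => b.repr (f (x + t • b l)) k) 0) • b k =
          b l * ∑ k, (deriv (fun t : ℝ => b.repr (f (x + t • b 0)) k) 0) • b k) := by
  have hdiff : Differentiable ℝ f := hf.differentiable one_ne_zero
  simp only [b.sum_deriv_repr_smul_eq_fderiv (hdiff _), hb0]
  rw [exists_hasDerivAt_comp_add_smul_mul_iff hdiff]
  have hmul (x : A) := b.forall_apply_eq_mul_apply_one_iff hb0 (fderiv ℝ f x).toLinearMap
  simp only [ContinuousLinearMap.coe_coe] at hmul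
  exact ⟨fun H l hl x => (hmul x).1 (H x) l hl, fun H x => (hmul x).2 fun l hl => H l hl x⟩
end

section
/- If A is a finite-dimensional commutative unital ℝ-algebra and f : A → A is A-holomorphic with all component functions uₖ ∈ C^∞, then f' is also A-holomorphic, and for every l ≥ 1 the l-th A-derivative exists and satisfies f⁽ˡ⁾(x) = ∑ₖ eₖ ∂ˡuₖ/∂x₀ˡ(x). -/
/-- If `f` is `A`-holomorphic with `C^∞` components, then all iterated `A`-derivatives
exist (each being again `A`-holomorphic) and `f⁽ˡ⁾ = ∑ₖ eₖ ∂ˡuₖ/∂x₀ˡ` for `l ≥ 1`. -/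
theorem iterated_A_derivatives_exist
    (A : Type*) [NormedCommRing A] [NormedAlgebra ℝ A] [FiniteDimensional ℝ A]
    (n : ℕ) (b : Module.Basis (Fin (n + 1)) ℝ A) (hb0 : b 0 = 1)
    (f f' : A → A)
    (hf : ContDiff ℝ (⊤ : ℕ∞) f)
    (hholo : ∀ x h : A, HasDerivAt (fun ε : ℝ => f (x + ε • h)) (h * f' x) 0) :
    ∃ F : ℕ → A → A, F 0 = f ∧ F 1 = f' ∧
      (∀ l : ℕ, ∀ x h : A,
        HasDerivAt (fun ε : ℝ => F l (x + ε • h)) (h * F (l + 1) x) 0) ∧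
      (∀ l : ℕ, 1 ≤ l → ∀ x : A,
        F l x = ∑ k, (iteratedDeriv l (fun t : ℝ => b.repr (f (x + t • b 0)) k) 0) • b k) := by
  classical
  set D : (A → A) → (A → A) := fun g x => fderiv ℝ g x 1 with hD
  -- the key step: the invariant is preserved when passing from `g` to `D g`
  have key : ∀ g : A → A, ContDiff ℝ (⊤ : ℕ∞) g → (∀ x h, fderiv ℝ g x h = h * D g x) →
      ContDiff ℝ (⊤ : ℕ∞) (D g) ∧ ∀ x h, fderiv ℝ (D g) x h = h * D (D g) x := by
    intro g hg hgd
    have hg' : ContDiff ℝ (⊤ : ℕ∞) (fderiv ℝ g) := hg.fderiv_right (by simp)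
    have hDg : ContDiff ℝ (⊤ : ℕ∞) (D g) :=
      (ContinuousLinearMap.apply ℝ A (1 : A)).contDiff.comp hg'
    refine ⟨hDg, fun x h => ?_⟩
    have hgdiff : Differentiable ℝ g := hg.differentiable (by simp)
    have hx : HasFDerivAt (fderiv ℝ g) (fderiv ℝ (fderiv ℝ g) x) x :=
      (hg'.differentiable (by simp) x).hasFDerivAt
    have hsymm := second_derivative_symmetric (fun y => (hgdiff y).hasFDerivAt) hx
    have e1 : HasFDerivAt (D g)
        ((ContinuousLinearMap.apply ℝ A (1 : A)).comp (fderiv ℝ (fderiv ℝ g) x)) x :=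
      (ContinuousLinearMap.apply ℝ A (1 : A)).hasFDerivAt.comp x hx
    have e1' : fderiv ℝ (D g) x h = fderiv ℝ (fderiv ℝ g) x h 1 := by
      rw [e1.fderiv]; rfl
    have e2 : HasFDerivAt (fun y => fderiv ℝ g y h)
        ((ContinuousLinearMap.apply ℝ A h).comp (fderiv ℝ (fderiv ℝ g) x)) x :=
      (ContinuousLinearMap.apply ℝ A h).hasFDerivAt.comp x hx
    have e2' : fderiv ℝ (fun y => fderiv ℝ g y h) x 1 = fderiv ℝ (fderiv ℝ g) x 1 h := by
      rw [e2.fderiv]; rfl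
    have e3 : (fun y => fderiv ℝ g y h) = fun y => h * D g y := by
      funext y; exact hgd y h
    have hDgx : HasFDerivAt (D g) (fderiv ℝ (D g) x) x :=
      (hDg.differentiable (by simp) x).hasFDerivAt
    have e4 : HasFDerivAt (fun y => h * D g y) (h • fderiv ℝ (D g) x) x :=
      hDgx.const_mul h
    calc fderiv ℝ (D g) x h = fderiv ℝ (fderiv ℝ g) x h 1 := e1'
      _ = fderiv ℝ (fderiv ℝ g) x 1 h := hsymm h 1
      _ = fderiv ℝ (fun y => fderiv ℝ g y h) x 1 := e2'.symm
      _ = fderiv ℝ (fun y => h * D g y) x 1 := by rw [e3]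
      _ = h * D (D g) x := by rw [e4.fderiv]; simp [hD, smul_eq_mul]
  -- base case: the invariant holds for `f`
  have hline : ∀ (x h : A) (t : ℝ), HasDerivAt (fun ε : ℝ => x + ε • h) h t := by
    intro x h t
    simpa using ((hasDerivAt_id t).smul_const h).const_add x
  have base0 : ∀ x h : A, fderiv ℝ f x h = h * f' x := by
    intro x h
    have h1 : HasDerivAt (fun ε : ℝ => f (x + ε • h)) (fderiv ℝ f x h) 0 := by
      have hfd : HasFDerivAt f (fderiv ℝ f x) (x + (0 : ℝ) • h) := by
        simpa using (hf.differentiable (by simp) x).hasFDerivAt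
      exact hfd.comp_hasDerivAt 0 (hline x h 0)
    exact h1.unique (hholo x h)
  have hDf : D f = f' := by
    funext x
    have := base0 x 1
    simpa [hD] using this
  have base : ∀ x h : A, fderiv ℝ f x h = h * D f x := by
    intro x h; rw [hDf]; exact base0 x h
  -- the iterated derivative sequence
  set F : ℕ → A → A := fun l => D^[l] f with hF
  have hFsucc : ∀ l, F (l + 1) = D (F l) := by
    intro l; simp [hF, Function.iterate_succ_apply']
  have main : ∀ l, ContDiff ℝ (⊤ : ℕ∞) (F l) ∧ ∀ x h, fderiv ℝ (F l) x h = h * F (l + 1) x := by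
    intro l
    induction l with
    | zero =>
      refine ⟨hf, fun x h => ?_⟩
      have : F 0 = f := rfl
      rw [this, hFsucc 0, this]
      exact base x h
    | succ l ih =>
      obtain ⟨h1, h2⟩ := ih
      have h2' : ∀ x h, fderiv ℝ (F l) x h = h * D (F l) x := by
        intro x h; rw [← hFsucc l]; exact h2 x h
      obtain ⟨k1, k2⟩ := key (F l) h1 h2'
      rw [← hFsucc l] at k1 k2
      refine ⟨k1, fun x h => ?_⟩
      rw [hFsucc (l + 1), hFsucc l]
      rw [hFsucc l] at k2
      exact k2 x h
  -- the directional derivative statement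
  have hDirAt : ∀ (l : ℕ) (x h : A) (t : ℝ),
      HasDerivAt (fun ε : ℝ => F l (x + ε • h)) (h * F (l + 1) (x + t • h)) t := by
    intro l x h t
    obtain ⟨h1, h2⟩ := main l
    have hfd : HasFDerivAt (F l) (fderiv ℝ (F l) (x + t • h)) (x + t • h) :=
      (h1.differentiable (by simp) _).hasFDerivAt
    have := hfd.comp_hasDerivAt t (hline x h t)
    simp only [h2] at this
    exact this
  have hDir : ∀ (l : ℕ) (x h : A),
      HasDerivAt (fun ε : ℝ => F l (x + ε • h)) (h * F (l + 1) x) 0 := by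
    intro l x h
    simpa using hDirAt l x h 0
  -- identification with iterated real derivatives along the `1` direction
  have hiter : ∀ (l m : ℕ) (x : A),
      iteratedDeriv l (fun t : ℝ => F m (x + t • (1 : A))) 0 = F (l + m) x := by
    intro l
    induction l with
    | zero => intro m x; simp
    | succ l ih =>
      intro m x
      have hderiv : deriv (fun t : ℝ => F m (x + t • (1 : A)))
          = fun t : ℝ => F (m + 1) (x + t • (1 : A)) := by
        funext t
        have := hDirAt m x 1 t
        simpa using this.deriv
      rw [iteratedDeriv_succ', hderiv, ih (m + 1) x]
      congr 1
      omega
  -- commuting a continuous linear functional with iterated derivatives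
  have hclm : ∀ (L : A →L[ℝ] ℝ) (g : ℝ → A), ContDiff ℝ (⊤ : ℕ∞) g → ∀ (l : ℕ) (t : ℝ),
      iteratedDeriv l (fun s => L (g s)) t = L (iteratedDeriv l g t) := by
    intro L g hg l t
    have : iteratedFDeriv ℝ l (L ∘ g) t
        = L.compContinuousMultilinearMap (iteratedFDeriv ℝ l g t) :=
      L.iteratedFDeriv_comp_left (hg.contDiffAt (x := t)) (by exact_mod_cast le_top)
    rw [iteratedDeriv_eq_iteratedFDeriv, iteratedDeriv_eq_iteratedFDeriv]
    exact congrFun (congrArg _ this) _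
  refine ⟨F, rfl, by rw [hFsucc 0]; exact hDf, hDir, ?_⟩
  intro l _ x
  rw [hb0]
  have hgsm : ContDiff ℝ (⊤ : ℕ∞) (fun t : ℝ => f (x + t • (1 : A))) :=
    hf.comp (contDiff_const.add (contDiff_id.smul contDiff_const))
  have hsum : ∀ k, iteratedDeriv l (fun t : ℝ => b.repr (f (x + t • (1 : A))) k) 0
      = b.repr (F l x) k := by
    intro k
    set L : A →L[ℝ] ℝ :=
      LinearMap.toContinuousLinearMap ((Finsupp.lapply k).comp b.repr.toLinearMap) with hL
    have : (fun t : ℝ => b.repr (f (x + t • (1 : A))) k)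
        = fun t : ℝ => L (f (x + t • (1 : A))) := by
      funext t; simp [hL]
    rw [this, hclm L _ hgsm l 0]
    have h0 : iteratedDeriv l (fun t : ℝ => f (x + t • (1 : A))) 0 = F l x := by
      have := hiter l 0 x
      simpa [hF] using this
    rw [h0]
    simp [hL]
  calc F l x = ∑ k, b.repr (F l x) k • b k := (b.sum_repr (F l x)).symm
    _ = ∑ k, (iteratedDeriv l (fun t : ℝ => b.repr (f (x + t • (1 : A))) k) 0) • b k := by
        simp_rw [hsum]
end
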